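/- arXiv:2404.10657 — 2 statements merged into one kernel-verified Lean document; each statement's English description precedes it below -/
import Mathlib

section
/- Let H be a Hilbert space, a : V × V → ℝ a symmetric bilinear form on a Hilbert space V continuously embedded in H, with a(v,v) ≥ θ‖v‖²_V for some θ > 0 (coercivity) and ‖v‖²_H ≤ C_p a(v,v) (Poincaré). Suppose u* ∈ V satisfies a(u*, v) = (f, v)_H for all v ∈ V, and u : [0,∞) → V is a differentiable solution of (u′(t), v)_H + a(u(t), v) = (f, v)_H for all v ∈ V. Then t ↦ ‖u(t) − u*‖²_H is non-increasing, its derivative equals −2a(u(t) − u*, u(t) − u*), and a(u(t) − u*, u(t) − u*) → 0 as t → ∞; consequently u(t) → u* in V. -/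
/-!
Write `w = u - u*`, which solves the homogeneous problem `(w', v)_H + a(w, v) = 0`. Then
`E(t) = ‖w(t)‖²_H` has derivative `-2a(w(t), w(t)) ≤ 0`. Symmetry of `a` makes
`x ↦ (w(x), w(c - x))_H` constant on `[0, c]`, so `(w(s), w(t))_H = E((s + t)/2)`, and expanding
`‖w(s) - w(t)‖²_H ≥ 0` shows that `E` is midpoint convex. For a midpoint convex function the slope
of a chord ending at `t` is at most the derivative at `t`; on `[0, t]` this reads
`2t·a(w(t), w(t)) ≤ E(0) - E(t) ≤ E(0)`, so the energy decays like `1/t`, and coercivity turns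
this into convergence in `V`.
-/

open Filter Topology Set

def MidpointConvexOn (s : Set ℝ) (f : ℝ → ℝ) : Prop :=
  ∀ ⦃x⦄, x ∈ s → ∀ ⦃y⦄, y ∈ s → f ((x + y) / 2) ≤ (f x + f y) / 2

namespace MidpointConvexOn

variable {s t : Set ℝ} {f : ℝ → ℝ} {p b : ℝ}

theorem mono (hf : MidpointConvexOn s f) (hts : t ⊆ s) : MidpointConvexOn t f :=
  fun _ hx _ hy => hf (hts hx) (hts hy)

theorem slope_le_slope_midpoint (hf : MidpointConvexOn (Icc p b) f) (hpb : p < b) :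
    slope f p b ≤ slope f ((p + b) / 2) b := by
  have hmid := hf (left_mem_Icc.2 hpb.le) (right_mem_Icc.2 hpb.le)
  rw [slope_def_field, slope_def_field, div_le_div_iff₀ (by linarith) (by linarith)]
  nlinarith [mul_le_mul_of_nonneg_left hmid (sub_nonneg.2 hpb.le)]

theorem slope_le_slope_sub_div_two_pow (hf : MidpointConvexOn (Icc p b) f) (hpb : p < b)
    (k : ℕ) : slope f p b ≤ slope f (b - (b - p) / 2 ^ k) b := by
  induction k with
  | zero => simp
  | succ k ih =>
    have hpos : 0 < (b - p) / 2 ^ k := div_pos (sub_pos.2 hpb) (by positivity)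
    have hle : (b - p) / 2 ^ k ≤ b - p := div_le_self (sub_pos.2 hpb).le (one_le_pow₀ one_le_two)
    have hnext : (b - (b - p) / 2 ^ k + b) / 2 = b - (b - p) / 2 ^ (k + 1) := by
      rw [pow_succ]; field_simp; ring
    calc slope f p b ≤ slope f (b - (b - p) / 2 ^ k) b := ih
      _ ≤ slope f (b - (b - p) / 2 ^ (k + 1)) b := by
        rw [← hnext]
        exact (hf.mono (Icc_subset_Icc_left (by linarith))).slope_le_slope_midpoint
          (by linarith)

theorem slope_le_of_hasDerivAt (hf : MidpointConvexOn (Icc p b) f) (hpb : p < b) {f' : ℝ}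
    (hderiv : HasDerivAt f f' b) : slope f p b ≤ f' := by
  have hstep : Tendsto (fun k : ℕ => (b - p) / 2 ^ k) atTop (𝓝 0) :=
    tendsto_const_nhds.div_atTop (tendsto_pow_atTop_atTop_of_one_lt one_lt_two)
  have hpoints : Tendsto (fun k : ℕ => b - (b - p) / 2 ^ k) atTop (𝓝[≠] b) := by
    refine tendsto_nhdsWithin_iff.2 ⟨by simpa using hstep.const_sub b, ?_⟩
    refine Eventually.of_forall fun k => ?_
    have : 0 < (b - p) / 2 ^ k := div_pos (sub_pos.2 hpb) (by positivity)
    simp only [mem_compl_iff, mem_singleton_iff]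
    linarith
  refine ge_of_tendsto (hderiv.tendsto_slope.comp hpoints) (Eventually.of_forall fun k => ?_)
  rw [Function.comp_apply, slope_comm f b]
  exact hf.slope_le_slope_sub_div_two_pow hpb k

end MidpointConvexOn

theorem tendsto_nhds_of_coercive {V α : Type*} [SeminormedAddCommGroup V] {q : V → ℝ} {θ : ℝ}
    (hθ : 0 < θ) (hcoer : ∀ v, θ * ‖v‖ ^ 2 ≤ q v) {l : Filter α} {g : α → V} {x : V}
    (h : Tendsto (fun t => q (g t - x)) l (𝓝 0)) : Tendsto g l (𝓝 x) := by
  rw [tendsto_iff_norm_sub_tendsto_zero]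
  have hsq : Tendsto (fun t => ‖g t - x‖ ^ 2) l (𝓝 0) :=
    squeeze_zero (fun _ => sq_nonneg _) (fun t => (le_div_iff₀' hθ).2 (hcoer _))
      (by simpa using h.div_const θ)
  simpa using hsq.sqrt

section

variable {H V : Type*} [NormedAddCommGroup H] [InnerProductSpace ℝ H] [AddCommGroup V]
  [Module ℝ V]

structure IsHomogeneousSolution (ι : V →ₗ[ℝ] H) (a : V →ₗ[ℝ] V →ₗ[ℝ] ℝ) (w : ℝ → V)
    (w' : ℝ → H) : Prop where
  hasDerivAt : ∀ t, HasDerivAt (fun s => ι (w s)) (w' t) t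
  inner_deriv : ∀ t, 0 ≤ t → ∀ v, inner ℝ (w' t) (ι v) = -a (w t) v

variable {ι : V →ₗ[ℝ] H} {a : V →ₗ[ℝ] V →ₗ[ℝ] ℝ}

theorem isHomogeneousSolution_sub_stationary {f : H} {u : ℝ → V} {u' : ℝ → H} {ustar : V}
    (hderiv : ∀ t, HasDerivAt (fun s => ι (u s)) (u' t) t)
    (heq : ∀ t, 0 ≤ t → ∀ v, inner ℝ (u' t) (ι v) + a (u t) v = inner ℝ f (ι v))
    (hstat : ∀ v, a ustar v = inner ℝ f (ι v)) :
    IsHomogeneousSolution ι a (fun t => u t - ustar) u' where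
  hasDerivAt t := by simpa only [map_sub] using (hderiv t).sub_const (ι ustar)
  inner_deriv t ht v := by
    rw [map_sub, LinearMap.sub_apply]
    linarith [heq t ht v, hstat v]

namespace IsHomogeneousSolution

variable {w : ℝ → V} {w' : ℝ → H}

theorem hasDerivAt_norm_sq (hw : IsHomogeneousSolution ι a w w') {t : ℝ} (ht : 0 ≤ t) :
    HasDerivAt (fun s => ‖ι (w s)‖ ^ 2) (-2 * a (w t) (w t)) t := by
  convert (hw.hasDerivAt t).norm_sq using 1
  rw [real_inner_comm, hw.inner_deriv t ht]
  ring

theorem antitoneOn_norm_sq (hw : IsHomogeneousSolution ι a w w') (hnonneg : ∀ v, 0 ≤ a v v) :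
    AntitoneOn (fun t => ‖ι (w t)‖ ^ 2) (Ici 0) :=
  antitoneOn_of_hasDerivWithinAt_nonpos (convex_Ici 0)
    (fun t ht => (hw.hasDerivAt_norm_sq ht).continuousAt.continuousWithinAt)
    (fun t ht => (hw.hasDerivAt_norm_sq (interior_subset ht : t ∈ Ici 0)).hasDerivWithinAt)
    (fun t _ => by linarith [hnonneg (w t)])

theorem inner_apply_sub_eq_norm_sq_half (hw : IsHomogeneousSolution ι a w w')
    (hsymm : ∀ u v, a u v = a v u) {c x : ℝ} (hx : x ∈ Icc 0 c) :
    inner ℝ (ι (w x)) (ι (w (c - x))) = ‖ι (w (c / 2))‖ ^ 2 := by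
  set Q := fun y => inner ℝ (ι (w y)) (ι (w (c - y)))
  have hQ : ∀ y ∈ Icc 0 c, HasDerivAt Q 0 y := by
    rintro y ⟨hy0, hyc⟩
    have hreflect : HasDerivAt (fun z => ι (w (c - z))) (-w' (c - y)) y := by
      simpa [Function.comp_def] using (hw.hasDerivAt (c - y)).scomp y ((hasDerivAt_id y).const_sub c)
    refine ((hw.hasDerivAt y).inner ℝ hreflect).congr_deriv ?_
    rw [inner_neg_right, real_inner_comm, hw.inner_deriv y hy0,
      hw.inner_deriv (c - y) (by linarith), hsymm]
    ring
  have hconst := constant_of_has_deriv_right_zero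
    (fun y hy => (hQ y hy).continuousAt.continuousWithinAt)
    (fun y hy => (hQ y (Ico_subset_Icc_self hy)).hasDerivWithinAt)
  have hc : 0 ≤ c := hx.1.trans hx.2
  calc Q x = Q (c / 2) := (hconst x hx).trans (hconst (c / 2) ⟨by linarith, by linarith⟩).symm
    _ = _ := by simp only [Q, sub_half, real_inner_self_eq_norm_sq]

theorem midpointConvexOn_norm_sq (hw : IsHomogeneousSolution ι a w w')
    (hsymm : ∀ u v, a u v = a v u) : MidpointConvexOn (Ici 0) (fun t => ‖ι (w t)‖ ^ 2) := by
  intro s hs t ht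
  have hinner : inner ℝ (ι (w s)) (ι (w t)) = ‖ι (w ((s + t) / 2))‖ ^ 2 := by
    simpa using hw.inner_apply_sub_eq_norm_sq_half hsymm
      (c := s + t) ⟨hs, le_add_of_nonneg_right ht⟩
  have hexpand := norm_sub_sq_real (ι (w s)) (ι (w t))
  nlinarith [sq_nonneg ‖ι (w s) - ι (w t)‖]

theorem two_mul_mul_apply_self_le (hw : IsHomogeneousSolution ι a w w')
    (hsymm : ∀ u v, a u v = a v u) {t : ℝ} (ht : 0 < t) :
    2 * t * a (w t) (w t) ≤ ‖ι (w 0)‖ ^ 2 := by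
  have hslope := ((hw.midpointConvexOn_norm_sq hsymm).mono Icc_subset_Ici_self
    ).slope_le_of_hasDerivAt ht (hw.hasDerivAt_norm_sq ht.le)
  rw [slope_def_field, sub_zero, div_le_iff₀ ht] at hslope
  nlinarith [sq_nonneg ‖ι (w t)‖]

theorem tendsto_apply_self_atTop (hw : IsHomogeneousSolution ι a w w')
    (hsymm : ∀ u v, a u v = a v u) (hnonneg : ∀ v, 0 ≤ a v v) :
    Tendsto (fun t => a (w t) (w t)) atTop (𝓝 0) := by
  have hbound : ∀ᶠ t in atTop, a (w t) (w t) ≤ ‖ι (w 0)‖ ^ 2 / 2 / t := by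
    filter_upwards [eventually_gt_atTop 0] with t ht
    rw [le_div_iff₀ ht]
    linarith [hw.two_mul_mul_apply_self_le hsymm ht]
  exact squeeze_zero' (Eventually.of_forall fun t => hnonneg _) hbound
    (tendsto_const_nhds.div_atTop tendsto_id)

end IsHomogeneousSolution

end

theorem asymptotic_convergence_to_stationary_general
    {H V : Type*} [NormedAddCommGroup H] [InnerProductSpace ℝ H]
    [NormedAddCommGroup V] [InnerProductSpace ℝ V]
    -- continuous embedding of V into H
    (ι : V →L[ℝ] H)
    -- the symmetric bilinear form a on V
    (a : V →ₗ[ℝ] V →ₗ[ℝ] ℝ)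
    (hsymm : ∀ u v : V, a u v = a v u)
    (θ : ℝ) (hθ : 0 < θ)
    -- coercivity a(v,v) ≥ θ‖v‖²_V
    (hcoer : ∀ v : V, θ * ‖v‖ ^ 2 ≤ a v v)
    (f : H) (ustar : V)
    -- u* solves the stationary problem a(u*, v) = (f, v)_H
    (hstat : ∀ v : V, a ustar v = @inner ℝ _ _ f (ι v))
    (u : ℝ → V) (u' : ℝ → H)
    -- u is a differentiable solution of (u′(t), v)_H + a(u(t), v) = (f, v)_H
    (hderiv : ∀ t, HasDerivAt (fun s => ι (u s)) (u' t) t)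
    (heq : ∀ t, 0 ≤ t → ∀ v : V,
      (@inner ℝ _ _ (u' t) (ι v)) + a (u t) v = @inner ℝ _ _ f (ι v)) :
    -- t ↦ ‖u(t) − u*‖²_H is non-increasing on [0,∞)
    AntitoneOn (fun t => ‖ι (u t) - ι ustar‖ ^ 2) (Set.Ici 0) ∧
    -- with derivative −2a(u(t) − u*, u(t) − u*)
    (∀ t, 0 ≤ t → HasDerivAt (fun s => ‖ι (u s) - ι ustar‖ ^ 2)
      (-2 * a (u t - ustar) (u t - ustar)) t) ∧
    -- the energy of the difference tends to zero
    Tendsto (fun t => a (u t - ustar) (u t - ustar)) atTop (𝓝 0) ∧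
    -- consequently u(t) → u* in V
    Tendsto u atTop (𝓝 ustar) := by
  have hw : IsHomogeneousSolution (ι : V →ₗ[ℝ] H) a (fun t => u t - ustar) u' :=
    isHomogeneousSolution_sub_stationary hderiv heq hstat
  have hnonneg : ∀ v, 0 ≤ a v v := fun v => (mul_nonneg hθ.le (sq_nonneg _)).trans (hcoer v)
  have hE : (fun t => ‖ι (u t) - ι ustar‖ ^ 2) =
      fun t => ‖(ι : V →ₗ[ℝ] H) (u t - ustar)‖ ^ 2 := by
    simp only [ContinuousLinearMap.coe_coe, map_sub]
  have henergy := hw.tendsto_apply_self_atTop hsymm hnonneg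
  refine ⟨hE ▸ hw.antitoneOn_norm_sq hnonneg, fun t ht => hE ▸ hw.hasDerivAt_norm_sq ht,
    henergy, tendsto_nhds_of_coercive hθ hcoer henergy⟩

theorem asymptotic_convergence_to_stationary
    {H V : Type*} [NormedAddCommGroup H] [InnerProductSpace ℝ H]
    [NormedAddCommGroup V] [InnerProductSpace ℝ V]
    -- continuous embedding of V into H
    (ι : V →L[ℝ] H)
    -- the symmetric bilinear form a on V
    (a : V →ₗ[ℝ] V →ₗ[ℝ] ℝ)
    (hsymm : ∀ u v : V, a u v = a v u)
    (θ Cp : ℝ) (hθ : 0 < θ)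
    -- coercivity a(v,v) ≥ θ‖v‖²_V
    (hcoer : ∀ v : V, θ * ‖v‖ ^ 2 ≤ a v v)
    -- Poincaré inequality ‖v‖²_H ≤ Cp a(v,v)
    (hPoin : ∀ v : V, ‖ι v‖ ^ 2 ≤ Cp * a v v)
    (f : H) (ustar : V)
    -- u* solves the stationary problem a(u*, v) = (f, v)_H
    (hstat : ∀ v : V, a ustar v = @inner ℝ _ _ f (ι v))
    (u : ℝ → V) (u' : ℝ → H)
    -- u is a differentiable solution of (u′(t), v)_H + a(u(t), v) = (f, v)_H
    (hderiv : ∀ t, HasDerivAt (fun s => ι (u s)) (u' t) t)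
    (heq : ∀ t, 0 ≤ t → ∀ v : V,
      (@inner ℝ _ _ (u' t) (ι v)) + a (u t) v = @inner ℝ _ _ f (ι v)) :
    -- t ↦ ‖u(t) − u*‖²_H is non-increasing on [0,∞)
    AntitoneOn (fun t => ‖ι (u t) - ι ustar‖ ^ 2) (Set.Ici 0) ∧
    -- with derivative −2a(u(t) − u*, u(t) − u*)
    (∀ t, 0 ≤ t → HasDerivAt (fun s => ‖ι (u s) - ι ustar‖ ^ 2)
      (-2 * a (u t - ustar) (u t - ustar)) t) ∧
    -- the energy of the difference tends to zero
    Tendsto (fun t => a (u t - ustar) (u t - ustar)) atTop (𝓝 0) ∧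
    -- consequently u(t) → u* in V
    Tendsto u atTop (𝓝 ustar) :=
  asymptotic_convergence_to_stationary_general ι a hsymm θ hθ hcoer f ustar hstat u u' hderiv heq
end

section
/- Suppose f ∈ L²(−1,1) is odd with Fourier sine coefficients α_n satisfying |α_n| ≤ C/n⁴. Then the partial sums Σ_{n=1}^N α_n (sin(πnx/2) ± πnx/2) converge in L²(−1,1) and differ from the limit of Σ α_n sin(πnx/2) by a linear function cx; consequently f + cx is an L²-limit of finite combinations of the functions sin(πnx/2) + πnx/2 and sin(πnx/2) − πnx/2. -/
/-!
STATEMENT 19: Key density computation: if f ∈ L²(−1,1) is odd with Fourier sine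
coefficients α_n (for the modes sin(πnx/2)) satisfying |α_n| ≤ C/n⁴, then the partial
sums of Σ α_n (sin(πnx/2) ± πnx/2) converge in L²(−1,1), and their limits differ from
f by a linear function cx; i.e. f ± cx is an L²-limit of finite combinations of the
corrected modes sin(πnx/2) + πnx/2 and sin(πnx/2) − πnx/2.
-/

open MeasureTheory Filter Topology Real intervalIntegral

noncomputable section
set_option maxHeartbeats 2000000

lemma key_lemma (f : ℝ → ℝ) (S : ℕ → ℝ → ℝ) (hS : ∀ N, Continuous (S N)) (δ : ℕ → ℝ)
    (hf2 : IntegrableOn (fun x => f x ^ 2) (Set.Ioc (-1 : ℝ) 1) volume)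
    (hfm : AEStronglyMeasurable f (volume.restrict (Set.Ioc (-1 : ℝ) 1)))
    (hδ : Tendsto δ atTop (𝓝 0))
    (hconv : Tendsto (fun N => ∫ x in (-1 : ℝ)..1, (S N x - f x) ^ 2) atTop (𝓝 0)) :
    Tendsto (fun N => ∫ x in (-1 : ℝ)..1, (S N x - f x + δ N * x) ^ 2) atTop (𝓝 0) := by
  have hab : (-1 : ℝ) ≤ 1 := by norm_num
  obtain ⟨A, hAdef⟩ : ∃ A : ℕ → ℝ → ℝ, ∀ N x, A N x = S N x - f x :=
    ⟨_, fun _ _ => rfl⟩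
  have hconv' : Tendsto (fun N => ∫ x in (-1 : ℝ)..1, A N x ^ 2) atTop (𝓝 0) := by
    refine hconv.congr fun N => ?_
    exact intervalIntegral.integral_congr fun x _ => by rw [hAdef]
  have hfin : volume (Set.Ioc (-1 : ℝ) 1) ≠ ⊤ := (measure_Ioc_lt_top).ne
  have hAm : ∀ N, AEStronglyMeasurable (A N) (volume.restrict (Set.Ioc (-1 : ℝ) 1)) := by
    intro N
    refine (((hS N).aestronglyMeasurable).sub hfm).congr ?_
    exact Filter.Eventually.of_forall fun x => (hAdef N x).symm
  have hA2 : ∀ N, IntegrableOn (fun x => A N x ^ 2) (Set.Ioc (-1 : ℝ) 1) volume := by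
    intro N
    refine Integrable.mono' (g := fun x => 2 * (S N x) ^ 2 + 2 * f x ^ 2) ?_ ?_ ?_
    · exact (((hS N).pow 2).integrableOn_Ioc.const_mul 2).add (hf2.const_mul 2)
    · exact (hAm N).pow 2
    · refine Filter.Eventually.of_forall fun x => ?_
      rw [Real.norm_eq_abs, abs_of_nonneg (sq_nonneg _)]
      rw [hAdef]
      show (S N x - f x) ^ 2 ≤ 2 * S N x ^ 2 + 2 * f x ^ 2
      nlinarith [sq_nonneg (S N x + f x)]
  have hA1 : ∀ N, IntegrableOn (A N) (Set.Ioc (-1 : ℝ) 1) volume := by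
    intro N
    refine Integrable.mono' (g := fun x => (A N x ^ 2 + 1) / 2) ?_ (hAm N) ?_
    · exact ((hA2 N).add (integrableOn_const measure_Ioc_lt_top.ne)).div_const 2
    · refine Filter.Eventually.of_forall fun x => ?_
      show ‖A N x‖ ≤ (A N x ^ 2 + 1) / 2
      rw [Real.norm_eq_abs]
      have h := sq_nonneg (|A N x| - 1)
      rw [sub_sq, sq_abs, one_pow, mul_one] at h
      linarith
  have hAx : ∀ N, IntegrableOn (fun x => A N x * x) (Set.Ioc (-1 : ℝ) 1) volume := by
    intro N
    refine Integrable.mono' (g := fun x => |A N x|) (hA1 N).abs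
      ((hAm N).mul (continuous_id.aestronglyMeasurable)) ?_
    refine (ae_restrict_mem measurableSet_Ioc).mono fun x hx => ?_
    rw [Real.norm_eq_abs, abs_mul]
    have hx1 : |x| ≤ 1 := abs_le.2 ⟨le_of_lt hx.1, hx.2⟩
    nlinarith [abs_nonneg (A N x)]
  -- interval integrable versions
  have II : ∀ (g : ℝ → ℝ), IntegrableOn g (Set.Ioc (-1 : ℝ) 1) volume →
      IntervalIntegrable g volume (-1) 1 := fun g hg =>
    (intervalIntegrable_iff_integrableOn_Ioc_of_le hab).2 hg
  have hA2I : ∀ N, IntervalIntegrable (fun x => A N x ^ 2) volume (-1) 1 := fun N => II _ (hA2 N)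
  have hAxI : ∀ N, IntervalIntegrable (fun x => A N x * x) volume (-1) 1 := fun N => II _ (hAx N)
  have hx2I : IntervalIntegrable (fun x : ℝ => x ^ 2) volume (-1) 1 :=
    (continuous_id.pow 2).intervalIntegrable _ _
  set K : ℝ := ∫ x in (-1 : ℝ)..1, x ^ 2 with hK
  set I2 : ℕ → ℝ := fun N => ∫ x in (-1 : ℝ)..1, A N x ^ 2 with hI2
  set J : ℕ → ℝ := fun N => ∫ x in (-1 : ℝ)..1, A N x * x with hJ
  have hsplit : ∀ N, (∫ x in (-1 : ℝ)..1, (A N x + δ N * x) ^ 2)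
      = I2 N + (2 * δ N) * J N + (δ N) ^ 2 * K := by
    intro N
    have h1 : (∫ x in (-1 : ℝ)..1, (A N x + δ N * x) ^ 2)
        = ∫ x in (-1 : ℝ)..1, (A N x ^ 2 + (2 * δ N) * (A N x * x) + (δ N) ^ 2 * x ^ 2) := by
      refine intervalIntegral.integral_congr fun x _ => by ring
    rw [h1, intervalIntegral.integral_add ((hA2I N).add ((hAxI N).const_mul _))
      (hx2I.const_mul _), intervalIntegral.integral_add (hA2I N) ((hAxI N).const_mul _),
      intervalIntegral.integral_const_mul, intervalIntegral.integral_const_mul]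
  have hKnn : 0 ≤ K := by
    rw [hK]
    exact intervalIntegral.integral_nonneg hab fun x _ => sq_nonneg x
  -- bound on J
  have hJb : ∀ N, |J N| ≤ (I2 N + K) / 2 := by
    intro N
    have h1 : |J N| ≤ ∫ x in (-1 : ℝ)..1, |A N x * x| :=
      intervalIntegral.abs_integral_le_integral_abs hab
    have h2 : (∫ x in (-1 : ℝ)..1, |A N x * x|)
        ≤ ∫ x in (-1 : ℝ)..1, (A N x ^ 2 + x ^ 2) / 2 := by
      refine intervalIntegral.integral_mono_on hab (hAxI N).abs
        (((hA2I N).add hx2I).div_const 2) fun x _ => ?_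
      rw [abs_mul]
      have h := sq_nonneg (|A N x| - |x|)
      rw [sub_sq, sq_abs, sq_abs] at h
      linarith
    have h3 : (∫ x in (-1 : ℝ)..1, (A N x ^ 2 + x ^ 2) / 2) = (I2 N + K) / 2 := by
      rw [intervalIntegral.integral_div, intervalIntegral.integral_add (hA2I N) hx2I]
    linarith [h1, h2.trans_eq h3]
  -- limits
  have hterm2 : Tendsto (fun N => (2 * δ N) * J N) atTop (𝓝 0) := by
    have hg : Tendsto (fun N => (2 * |δ N|) * ((I2 N + K) / 2)) atTop (𝓝 0) := by
      have h1 : Tendsto (fun N => 2 * |δ N|) atTop (𝓝 (2 * |(0 : ℝ)|)) :=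
        (hδ.abs).const_mul 2
      have h2 : Tendsto (fun N => (I2 N + K) / 2) atTop (𝓝 ((0 + K) / 2)) :=
        (hconv'.add_const K).div_const 2
      have := h1.mul h2
      simpa using this
    refine squeeze_zero_norm (fun N => ?_) hg
    rw [Real.norm_eq_abs, abs_mul, abs_mul, abs_two]
    have := hJb N
    have h2 : 0 ≤ (I2 N + K) / 2 := le_trans (abs_nonneg _) this
    have h0 : (0:ℝ) ≤ 2 * |δ N| := by positivity
    calc 2 * |δ N| * |J N| ≤ 2 * |δ N| * ((I2 N + K) / 2) :=
          mul_le_mul_of_nonneg_left this h0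
      _ = 2 * |δ N| * ((I2 N + K) / 2) := rfl
  have hterm3 : Tendsto (fun N => (δ N) ^ 2 * K) atTop (𝓝 0) := by
    have := ((hδ.mul hδ).mul_const K)
    simpa [pow_two] using this
  have := (hconv'.add hterm2).add hterm3
  simp only [add_zero] at this
  refine this.congr fun N => ?_
  rw [← hsplit N]
  exact intervalIntegral.integral_congr fun x _ => by rw [hAdef]


lemma unique_c (f : ℝ → ℝ)
    (hH : ¬ (IntegrableOn (fun x => f x ^ 2) (Set.Ioc (-1 : ℝ) 1) volume ∧
        AEStronglyMeasurable f (volume.restrict (Set.Ioc (-1 : ℝ) 1))))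
    (T : ℝ → ℝ) (hT : Continuous T) :
    Set.Subsingleton {c : ℝ |
      IntervalIntegrable (fun x => (T x - f x - c * x) ^ 2) volume (-1) 1} := by
  have hab : (-1 : ℝ) ≤ 1 := by norm_num
  intro c₁ h₁ c₂ h₂
  by_contra hne
  have hcc : c₂ - c₁ ≠ 0 := sub_ne_zero.2 (Ne.symm hne)
  apply hH
  have h₁' : IntegrableOn (fun x => (T x - f x - c₁ * x) ^ 2) (Set.Ioc (-1 : ℝ) 1) volume :=
    (intervalIntegrable_iff_integrableOn_Ioc_of_le hab).1 h₁
  have h₂' : IntegrableOn (fun x => (T x - f x - c₂ * x) ^ 2) (Set.Ioc (-1 : ℝ) 1) volume :=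
    (intervalIntegrable_iff_integrableOn_Ioc_of_le hab).1 h₂
  -- the difference of the squares is a.e. strongly measurable
  have hd : AEStronglyMeasurable
      (fun x => (T x - f x - c₁ * x) ^ 2 - (T x - f x - c₂ * x) ^ 2)
      (volume.restrict (Set.Ioc (-1 : ℝ) 1)) :=
    (h₁'.sub h₂').aestronglyMeasurable
  -- hence x * f x is a.e. strongly measurable
  have hxf : AEStronglyMeasurable (fun x => x * f x)
      (volume.restrict (Set.Ioc (-1 : ℝ) 1)) := by
    have hcont : Continuous (fun x : ℝ => (c₂ - c₁) * x * (2 * T x - (c₁ + c₂) * x)) := by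
      continuity
    have haes : AEStronglyMeasurable
        (fun x => (2 * (c₂ - c₁))⁻¹ *
          ((c₂ - c₁) * x * (2 * T x - (c₁ + c₂) * x) -
            ((T x - f x - c₁ * x) ^ 2 - (T x - f x - c₂ * x) ^ 2)))
        (volume.restrict (Set.Ioc (-1 : ℝ) 1)) :=
      (hcont.aestronglyMeasurable.sub hd).const_mul _
    refine haes.congr (Filter.Eventually.of_forall fun x => ?_)
    field_simp
    ring
  -- hence f is a.e. strongly measurable
  have hfm : AEStronglyMeasurable f (volume.restrict (Set.Ioc (-1 : ℝ) 1)) := by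
    have hne0 : ∀ᵐ x ∂(volume.restrict (Set.Ioc (-1 : ℝ) 1)), x ≠ 0 := by
      refine ae_restrict_of_ae ?_
      have : volume ({0} : Set ℝ) = 0 := measure_singleton 0
      rw [ae_iff]
      convert this using 2
      ext x
      simp
    have haes : AEStronglyMeasurable (fun x => x⁻¹ * (x * f x))
        (volume.restrict (Set.Ioc (-1 : ℝ) 1)) :=
      (measurable_inv.aestronglyMeasurable).mul hxf
    refine haes.congr ?_
    filter_upwards [hne0] with x hx
    field_simp
  refine ⟨?_, hfm⟩
  -- f² is integrable
  refine Integrable.mono'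
    (g := fun x => 2 * (T x - c₁ * x) ^ 2 + 2 * (T x - f x - c₁ * x) ^ 2) ?_ (hfm.pow 2) ?_
  · have hcont : Continuous (fun x : ℝ => (T x - c₁ * x) ^ 2) := by continuity
    exact ((hcont.integrableOn_Ioc).const_mul 2).add (h₁'.const_mul 2)
  · refine Filter.Eventually.of_forall fun x => ?_
    show ‖f x ^ 2‖ ≤ 2 * (T x - c₁ * x) ^ 2 + 2 * (T x - f x - c₁ * x) ^ 2
    rw [Real.norm_eq_abs, abs_of_nonneg (sq_nonneg _)]
    nlinarith [sq_nonneg (T x - c₁ * x + (T x - f x - c₁ * x))]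



theorem corrected_sine_modes_converge
    (f : ℝ → ℝ) (α : ℕ → ℝ) (C : ℝ)
    -- f is odd
    (hodd : ∀ x, f (-x) = -f x)
    -- decay of the Fourier coefficients
    (hdecay : ∀ n : ℕ, 1 ≤ n → |α n| ≤ C / (n : ℝ) ^ 4)
    -- the sine partial sums converge to f in L²(−1,1)
    (hconv : Tendsto (fun N => ∫ x in (-1 : ℝ)..1,
        ((∑ n ∈ Finset.Icc 1 N, α n * Real.sin (π * n * x / 2)) - f x) ^ 2)
      atTop (𝓝 0)) :
    ∃ c : ℝ,
      -- the "+" corrected partial sums converge in L² to f + cx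
      Tendsto (fun N => ∫ x in (-1 : ℝ)..1,
          ((∑ n ∈ Finset.Icc 1 N, α n * (Real.sin (π * n * x / 2) + π * n * x / 2))
            - (f x + c * x)) ^ 2) atTop (𝓝 0) ∧
      -- the "−" corrected partial sums converge in L² to f − cx
      Tendsto (fun N => ∫ x in (-1 : ℝ)..1,
          ((∑ n ∈ Finset.Icc 1 N, α n * (Real.sin (π * n * x / 2) - π * n * x / 2))
            - (f x - c * x)) ^ 2) atTop (𝓝 0) := by
  by_cases H : IntegrableOn (fun x => f x ^ 2) (Set.Ioc (-1 : ℝ) 1) volume ∧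
      AEStronglyMeasurable f (volume.restrict (Set.Ioc (-1 : ℝ) 1))
  · -- nice case
    set g : ℕ → ℝ := fun n => α n * (π * n / 2) with hg
    have hC : 0 ≤ C := le_trans (abs_nonneg _) (by simpa using hdecay 1 le_rfl)
    have hgsum : Summable g := by
      refine Summable.of_norm_bounded (g := fun n => (π * C / 2) * (1 / (n : ℝ) ^ 3))
        ((Real.summable_one_div_nat_pow.mpr (by norm_num)).mul_left _) fun n => ?_
      rcases Nat.eq_zero_or_pos n with hn | hn
      · subst hn; simp [hg]
      · have hn0 : ((n : ℝ)) ≠ 0 := Nat.cast_ne_zero.2 hn.ne'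
        have hnn : (0:ℝ) ≤ π * n / 2 := by positivity
        have h1 : ‖g n‖ = |α n| * (π * n / 2) := by
          rw [hg, Real.norm_eq_abs, abs_mul, abs_of_nonneg hnn]
        rw [h1]
        have h2 : |α n| * (π * n / 2) ≤ (C / (n : ℝ) ^ 4) * (π * n / 2) :=
          mul_le_mul_of_nonneg_right (hdecay n hn) hnn
        refine h2.trans (le_of_eq ?_)
        field_simp
    set c : ℝ := ∑' n, g n with hc
    set s : ℕ → ℝ := fun N => ∑ n ∈ Finset.Icc 1 N, g n with hs_def
    have hrange : ∀ N, ∑ n ∈ Finset.range (N + 1), g n = s N := by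
      intro N
      induction N with
      | zero => simp [hs_def, hg, Finset.Icc_eq_empty_of_lt (by norm_num : (1:ℕ) > 0)]
      | succ N ih =>
          rw [Finset.sum_range_succ, ih]
          show (∑ n ∈ Finset.Icc 1 N, g n) + g (N + 1) = ∑ n ∈ Finset.Icc 1 (N + 1), g n
          rw [Finset.sum_Icc_succ_top (Nat.succ_le_succ (Nat.zero_le N))]
    have hs : Tendsto s atTop (𝓝 c) := by
      have h1 : Tendsto (fun n => ∑ i ∈ Finset.range n, g i) atTop (𝓝 c) :=
        hgsum.hasSum.tendsto_sum_nat
      have h2 := h1.comp (tendsto_add_atTop_nat 1)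
      refine h2.congr fun N => hrange N
    have hδp : Tendsto (fun N => s N - c) atTop (𝓝 0) := by
      simpa using hs.sub_const c
    have hδm : Tendsto (fun N => c - s N) atTop (𝓝 0) := by
      simpa using (tendsto_const_nhds (x := c)).sub hs
    have hSc : ∀ N : ℕ, Continuous (fun x : ℝ =>
        ∑ n ∈ Finset.Icc 1 N, α n * Real.sin (π * n * x / 2)) := by
      intro N
      refine continuous_finset_sum _ fun i _ => ?_
      exact continuous_const.mul (Real.continuous_sin.comp (by continuity))
    have hkeyp := key_lemma f (fun N x => ∑ n ∈ Finset.Icc 1 N, α n * Real.sin (π * n * x / 2))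
      hSc (fun N => s N - c) H.1 H.2 hδp hconv
    have hkeym := key_lemma f (fun N x => ∑ n ∈ Finset.Icc 1 N, α n * Real.sin (π * n * x / 2))
      hSc (fun N => c - s N) H.1 H.2 hδm hconv
    refine ⟨c, ?_, ?_⟩
    · refine hkeyp.congr fun N => ?_
      refine intervalIntegral.integral_congr fun x _ => ?_
      have hsum : ∑ n ∈ Finset.Icc 1 N, α n * (Real.sin (π * n * x / 2) + π * n * x / 2)
          = (∑ n ∈ Finset.Icc 1 N, α n * Real.sin (π * n * x / 2)) + s N * x := by
        rw [hs_def, Finset.sum_mul, ← Finset.sum_add_distrib]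
        exact Finset.sum_congr rfl fun n _ => by rw [hg]; ring
      rw [hsum]
      ring
    · refine hkeym.congr fun N => ?_
      refine intervalIntegral.integral_congr fun x _ => ?_
      have hsum : ∑ n ∈ Finset.Icc 1 N, α n * (Real.sin (π * n * x / 2) - π * n * x / 2)
          = (∑ n ∈ Finset.Icc 1 N, α n * Real.sin (π * n * x / 2)) - s N * x := by
        rw [hs_def, Finset.sum_mul, ← Finset.sum_sub_distrib]
        exact Finset.sum_congr rfl fun n _ => by rw [hg]; ring
      rw [hsum]
      ring
  · -- pathological case: choose c so that all integrands are non-integrable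
    set Bp : ℕ → Set ℝ := fun N => {c : ℝ | IntervalIntegrable (fun x =>
        ((∑ n ∈ Finset.Icc 1 N, α n * (Real.sin (π * n * x / 2) + π * n * x / 2))
          - (f x + c * x)) ^ 2) volume (-1) 1} with hBp
    set Bm : ℕ → Set ℝ := fun N => {c : ℝ | IntervalIntegrable (fun x =>
        ((∑ n ∈ Finset.Icc 1 N, α n * (Real.sin (π * n * x / 2) - π * n * x / 2))
          - (f x - c * x)) ^ 2) volume (-1) 1} with hBm
    have hPc : ∀ N : ℕ, Continuous (fun x : ℝ =>
        ∑ n ∈ Finset.Icc 1 N, α n * (Real.sin (π * n * x / 2) + π * n * x / 2)) := by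
      intro N
      refine continuous_finset_sum _ fun i _ => ?_
      exact continuous_const.mul ((Real.continuous_sin.comp (by continuity)).add
        (by continuity))
    have hMc : ∀ N : ℕ, Continuous (fun x : ℝ =>
        ∑ n ∈ Finset.Icc 1 N, α n * (Real.sin (π * n * x / 2) - π * n * x / 2)) := by
      intro N
      refine continuous_finset_sum _ fun i _ => ?_
      exact continuous_const.mul ((Real.continuous_sin.comp (by continuity)).sub
        (by continuity))
    have hfp : ∀ N (c' : ℝ), (fun x : ℝ =>
        ((∑ n ∈ Finset.Icc 1 N, α n * (Real.sin (π * n * x / 2) + π * n * x / 2))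
          - f x - c' * x) ^ 2) = (fun x : ℝ =>
        ((∑ n ∈ Finset.Icc 1 N, α n * (Real.sin (π * n * x / 2) + π * n * x / 2))
          - (f x + c' * x)) ^ 2) := fun N c' => funext fun x => by ring
    have hfm' : ∀ N (c' : ℝ), (fun x : ℝ =>
        ((∑ n ∈ Finset.Icc 1 N, α n * (Real.sin (π * n * x / 2) - π * n * x / 2))
          - f x - (-c') * x) ^ 2) = (fun x : ℝ =>
        ((∑ n ∈ Finset.Icc 1 N, α n * (Real.sin (π * n * x / 2) - π * n * x / 2))
          - (f x - c' * x)) ^ 2) := fun N c' => funext fun x => by ring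
    have hBpsub : ∀ N, (Bp N).Subsingleton := by
      intro N c₁ hc₁ c₂ hc₂
      refine unique_c f H _ (hPc N) ?_ ?_
      · show IntervalIntegrable _ volume (-1) 1
        rw [hfp N c₁]
        exact hc₁
      · show IntervalIntegrable _ volume (-1) 1
        rw [hfp N c₂]
        exact hc₂
    have hBmsub : ∀ N, (Bm N).Subsingleton := by
      intro N c₁ hc₁ c₂ hc₂
      have h1 : IntervalIntegrable (fun x : ℝ =>
          ((∑ n ∈ Finset.Icc 1 N, α n * (Real.sin (π * n * x / 2) - π * n * x / 2))
            - f x - (-c₁) * x) ^ 2) volume (-1) 1 := by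
        rw [hfm' N c₁]; exact hc₁
      have h2 : IntervalIntegrable (fun x : ℝ =>
          ((∑ n ∈ Finset.Icc 1 N, α n * (Real.sin (π * n * x / 2) - π * n * x / 2))
            - f x - (-c₂) * x) ^ 2) volume (-1) 1 := by
        rw [hfm' N c₂]; exact hc₂
      have := unique_c f H _ (hMc N) h1 h2
      linarith [this]
    have hcount : ((⋃ N, Bp N) ∪ ⋃ N, Bm N).Countable :=
      ((Set.countable_iUnion fun N => (hBpsub N).countable).union
        (Set.countable_iUnion fun N => (hBmsub N).countable))
    have hex : ∃ c : ℝ, c ∉ (⋃ N, Bp N) ∪ ⋃ N, Bm N := by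
      by_contra h
      push_neg at h
      have : (Set.univ : Set ℝ).Countable := by
        rw [Set.eq_univ_of_forall h] at hcount
        exact hcount
      rw [Set.countable_univ_iff] at this
      exact not_countable this
    obtain ⟨c, hcmem⟩ := hex
    refine ⟨c, ?_, ?_⟩
    · have h0 : ∀ N, (∫ x in (-1 : ℝ)..1,
          ((∑ n ∈ Finset.Icc 1 N, α n * (Real.sin (π * n * x / 2) + π * n * x / 2))
            - (f x + c * x)) ^ 2) = 0 := by
        intro N
        refine intervalIntegral.integral_undef fun hI => ?_
        exact hcmem (Set.mem_union_left _ (Set.mem_iUnion.2 ⟨N, hI⟩))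
      exact tendsto_const_nhds.congr fun N => (h0 N).symm
    · have h0 : ∀ N, (∫ x in (-1 : ℝ)..1,
          ((∑ n ∈ Finset.Icc 1 N, α n * (Real.sin (π * n * x / 2) - π * n * x / 2))
            - (f x - c * x)) ^ 2) = 0 := by
        intro N
        refine intervalIntegral.integral_undef fun hI => ?_
        exact hcmem (Set.mem_union_right _ (Set.mem_iUnion.2 ⟨N, hI⟩))
      exact tendsto_const_nhds.congr fun N => (h0 N).symm
end
end
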